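/- arXiv:1612.08875 — 2 statements merged into one kernel-verified Lean document; each statement's English description precedes it below -/
import Mathlib

section
/- Let φ : ℝ → ℝ be convex, differentiable, and decreasing, and let x₁,…,x_U ∈ ℝ^d, w_sup ∈ ℝ^d. Then there exists q ∈ [0,1]^U such that Σ_{i=1}^U [q_i φ'(xᵢᵀw_sup) - (1-q_i) φ'(-xᵢᵀw_sup)] xᵢ = 0 ∈ ℝ^d. -/
open Finset

lemma deriv_nonpos_of_dec (φ : ℝ → ℝ) (hdiff : Differentiable ℝ φ)
    (hdec : ∀ a b : ℝ, a ≤ b → φ b ≤ φ a) (t : ℝ) : deriv φ t ≤ 0 := by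
  have h2 := hasDerivAt_iff_tendsto_slope.mp (hdiff t).hasDerivAt
  have h3 : Filter.Tendsto (slope φ t) (nhdsWithin t (Set.Ioi t)) (nhds (deriv φ t)) :=
    h2.mono_left (nhdsWithin_mono t (fun y hy => ne_of_gt hy))
  refine le_of_tendsto h3 ?_
  filter_upwards [self_mem_nhdsWithin] with y hy
  rw [slope_def_field]
  exact div_nonpos_iff.mpr (Or.inr ⟨sub_nonpos.mpr (hdec _ _ (le_of_lt hy)),
    sub_nonneg.mpr (le_of_lt hy)⟩)

/-- For a decreasing convex differentiable loss, there always exist soft responsibilities in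
`[0,1]^U` making the gradient of the unlabeled part of the semi-supervised risk vanish at the
supervised solution. -/
theorem supervised_in_constraint_set (d U : ℕ) (φ : ℝ → ℝ)
    (hconv : ConvexOn ℝ Set.univ φ) (hdiff : Differentiable ℝ φ)
    (hdec : ∀ a b : ℝ, a ≤ b → φ b ≤ φ a)
    (x : Fin U → Fin d → ℝ) (w_sup : Fin d → ℝ) :
    ∃ q : Fin U → ℝ, (∀ i, q i ∈ Set.Icc (0:ℝ) 1) ∧
      ∑ i, (q i * deriv φ (∑ j, x i j * w_sup j) -
        (1 - q i) * deriv φ (-(∑ j, x i j * w_sup j))) • x i = (0 : Fin d → ℝ) := by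
  set s : Fin U → ℝ := fun i => ∑ j, x i j * w_sup j with hs
  set a : Fin U → ℝ := fun i => deriv φ (s i) with ha
  set b : Fin U → ℝ := fun i => deriv φ (-(s i)) with hb
  have hA : ∀ i, a i ≤ 0 := fun i => deriv_nonpos_of_dec φ hdiff hdec _
  have hB : ∀ i, b i ≤ 0 := fun i => deriv_nonpos_of_dec φ hdiff hdec _
  refine ⟨fun i => if a i + b i = 0 then 0 else b i / (a i + b i), ?_, ?_⟩
  · intro i
    by_cases h : a i + b i = 0
    · simp [h]
    · have hneg : a i + b i < 0 := lt_of_le_of_ne (by linarith [hA i, hB i]) h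
      simp only [h, if_false]
      constructor
      · exact div_nonneg_iff.mpr (Or.inr ⟨hB i, hneg.le⟩)
      · rw [div_le_one_of_neg hneg]
        linarith [hA i]
  · have hz : ∀ i : Fin U,
        ((if a i + b i = 0 then 0 else b i / (a i + b i)) * a i -
          (1 - if a i + b i = 0 then 0 else b i / (a i + b i)) * b i) = 0 := by
      intro i
      by_cases h : a i + b i = 0
      · have ha0 : a i = 0 := le_antisymm (hA i) (by linarith [hB i])
        have hb0 : b i = 0 := by linarith
        simp [h, ha0, hb0]
      · simp only [h, if_false]
        field_simp
        ring
    funext k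
    simp only [Finset.sum_apply, Pi.smul_apply, smul_eq_mul, Pi.zero_apply]
    refine Finset.sum_eq_zero fun i _ => ?_
    rw [hz i]
    ring
end

section
/- Let X ∈ ℝ^{U×d} and w ∈ ℝ^d, and suppose ‖Xw‖₂ > √U. Then there is no r ∈ [-1,1]^U with Xᵀr = XᵀXw. Consequently, there is no q ∈ [0,1]^U with Xᵀq = ½(Xᵀ𝟙 + XᵀXw) where 𝟙 is the all-ones vector (substitute r = 2q - 𝟙). -/
open Matrix

lemma no_r_aux (U d : ℕ) (X : Matrix (Fin U) (Fin d) ℝ) (w : Fin d → ℝ)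
    (hnorm : Real.sqrt U < Real.sqrt (∑ i, ((X *ᵥ w) i) ^ 2)) :
    ¬ ∃ r : Fin U → ℝ, (∀ i, r i ∈ Set.Icc (-1:ℝ) 1) ∧
        Xᵀ *ᵥ r = Xᵀ *ᵥ (X *ᵥ w) := by
  rintro ⟨r, hr, heq⟩
  set u := X *ᵥ w with hu
  set A := ∑ i, u i ^ 2 with hA
  set B := ∑ i, r i ^ 2 with hB
  have hUA : (U : ℝ) < A := by
    have h0 : (0:ℝ) ≤ (U:ℝ) := Nat.cast_nonneg U
    have hAnn : 0 ≤ A := Finset.sum_nonneg fun i _ => sq_nonneg (u i)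
    nlinarith [Real.sq_sqrt h0, Real.sq_sqrt hAnn,
      Real.sqrt_nonneg (U:ℝ), Real.sqrt_nonneg A]
  have hBU : B ≤ (U : ℝ) := by
    have : B ≤ ∑ _i : Fin U, (1:ℝ) := by
      apply Finset.sum_le_sum
      intro i _
      have h1 := (hr i).1
      have h2 := (hr i).2
      nlinarith
    simpa using this
  -- u ⬝ u = u ⬝ r
  have hdot : u ⬝ᵥ u = u ⬝ᵥ r := by
    have h1 : w ⬝ᵥ (Xᵀ *ᵥ r) = u ⬝ᵥ r := by
      rw [Matrix.dotProduct_mulVec, Matrix.vecMul_transpose]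
    have h2 : w ⬝ᵥ (Xᵀ *ᵥ u) = u ⬝ᵥ u := by
      rw [Matrix.dotProduct_mulVec, Matrix.vecMul_transpose]
    rw [← h1, ← h2, heq]
  have hAeq : A = ∑ i, u i * r i := by
    have : u ⬝ᵥ u = A := by
      simp [dotProduct, hA, sq]
    rw [← this, hdot]; rfl
  have hcs : (∑ i, u i * r i) ^ 2 ≤ A * B := by
    simpa [hA, hB] using Finset.sum_mul_sq_le_sq_mul_sq Finset.univ u r
  have hApos : 0 < A := lt_of_le_of_lt (Nat.cast_nonneg U) hUA
  nlinarith

/-- Quadratic-loss improvement guarantee: if `‖Xw‖₂ > √U` then no `r ∈ [-1,1]^U` solves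
`Xᵀr = XᵀXw`, hence no `q ∈ [0,1]^U` solves the stationarity system
`Xᵀq = ½(Xᵀ𝟙 + XᵀXw)`. -/
theorem quadratic_improvement_norm_condition (U d : ℕ)
    (X : Matrix (Fin U) (Fin d) ℝ) (w : Fin d → ℝ)
    (hnorm : Real.sqrt U < Real.sqrt (∑ i, ((X *ᵥ w) i) ^ 2)) :
    (¬ ∃ r : Fin U → ℝ, (∀ i, r i ∈ Set.Icc (-1:ℝ) 1) ∧
        Xᵀ *ᵥ r = Xᵀ *ᵥ (X *ᵥ w)) ∧
    (¬ ∃ q : Fin U → ℝ, (∀ i, q i ∈ Set.Icc (0:ℝ) 1) ∧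
        Xᵀ *ᵥ q = (1 / 2 : ℝ) • (Xᵀ *ᵥ (fun _ => 1) + Xᵀ *ᵥ (X *ᵥ w))) := by
  have key := no_r_aux U d X w hnorm
  refine ⟨key, ?_⟩
  rintro ⟨q, hq, heq⟩
  apply key
  refine ⟨fun i => 2 * q i - 1, ?_, ?_⟩
  · intro i
    have h1 := (hq i).1
    have h2 := (hq i).2
    constructor <;> · show _ ≤ _; dsimp only; linarith
  · have hlin : Xᵀ *ᵥ (fun i => 2 * q i - 1) =
        (2:ℝ) • (Xᵀ *ᵥ q) - Xᵀ *ᵥ (fun _ => 1) := by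
      have : (fun i => 2 * q i - 1) = (2:ℝ) • q - (fun _ => (1:ℝ)) := by
        funext i; simp [Pi.smul_apply]
      rw [this, Matrix.mulVec_sub]
      congr 1
      rw [Matrix.mulVec_smul]
    rw [hlin, heq]
    funext j
    simp only [Pi.smul_apply, Pi.add_apply, Pi.sub_apply, smul_eq_mul]
    ring
end
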